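/- arXiv:2004.10153 — 6 statements merged into one kernel-verified Lean document; each statement's English description precedes it below -/
import Mathlib

section
/- Let n ≥ 1 and let A be an n×n real matrix. Suppose (i) A is irreducible, (ii) A is diagonally dominant, and (iii) there exists an index i such that |A i i| > ∑_{j ≠ i} |A i j|. Then A is nonsingular, i.e. det A ≠ 0. -/
/-- **Taussky's theorem, first part.** An irreducible, diagonally dominant real
matrix having at least one row where diagonal dominance is strict is nonsingular. -/
theorem taussky_nonsingular {n : ℕ} (hn : 1 ≤ n) (A : Matrix (Fin n) (Fin n) ℝ)
    (h_irr : ∀ S : Set (Fin n), S.Nonempty → S ≠ Set.univ →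
      ∃ i ∈ S, ∃ j ∉ S, A i j ≠ 0)
    (h_dd : ∀ i : Fin n, ∑ j ∈ Finset.univ.erase i, |A i j| ≤ |A i i|)
    (h_strict : ∃ i : Fin n, ∑ j ∈ Finset.univ.erase i, |A i j| < |A i i|) :
    A.det ≠ 0 := by
  intro hdet
  obtain ⟨v, hv0, hv⟩ := Matrix.exists_mulVec_eq_zero_iff.mpr hdet
  haveI : NeZero n := ⟨Nat.one_le_iff_ne_zero.mp hn⟩
  have hne : (Finset.univ : Finset (Fin n)).Nonempty := Finset.univ_nonempty
  obtain ⟨i0, -, hmax⟩ := Finset.exists_max_image Finset.univ (fun i => |v i|) hne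
  set M := |v i0| with hM
  have hMpos : 0 < M := by
    obtain ⟨k, hk⟩ := Function.ne_iff.mp hv0
    have : 0 < |v k| := abs_pos.mpr hk
    exact lt_of_lt_of_le this (hmax k (Finset.mem_univ k))
  have key : ∀ i, |v i| = M →
      (∑ j ∈ Finset.univ.erase i, |A i j| = |A i i|) ∧
      (∀ j, A i j ≠ 0 → |v j| = M) := by
    intro i hi
    have hrow : ∑ j, A i j * v j = 0 := by
      have := congrFun hv i
      simpa [Matrix.mulVec, dotProduct] using this
    have hsplit : A i i * v i = -∑ j ∈ Finset.univ.erase i, A i j * v j := by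
      have h := Finset.sum_erase_add Finset.univ (fun j => A i j * v j)
        (Finset.mem_univ i)
      have : ∑ j ∈ Finset.univ.erase i, A i j * v j + A i i * v i = 0 := by
        rw [h]; exact hrow
      linarith
    have h1 : |A i i| * M ≤ ∑ j ∈ Finset.univ.erase i, |A i j| * |v j| := by
      calc |A i i| * M = |A i i * v i| := by rw [abs_mul, hi]
        _ = |∑ j ∈ Finset.univ.erase i, A i j * v j| := by rw [hsplit, abs_neg]
        _ ≤ ∑ j ∈ Finset.univ.erase i, |A i j * v j| :=
            Finset.abs_sum_le_sum_abs _ _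
        _ = ∑ j ∈ Finset.univ.erase i, |A i j| * |v j| := by
            simp [abs_mul]
    have h2 : ∀ j ∈ Finset.univ.erase i, |A i j| * |v j| ≤ |A i j| * M :=
      fun j _ => mul_le_mul_of_nonneg_left (hmax j (Finset.mem_univ j)) (abs_nonneg _)
    have h3 : ∑ j ∈ Finset.univ.erase i, |A i j| * M ≤ |A i i| * M := by
      rw [← Finset.sum_mul]
      exact mul_le_mul_of_nonneg_right (h_dd i) (le_of_lt hMpos)
    have h2' : ∑ j ∈ Finset.univ.erase i, |A i j| * |v j| ≤
        ∑ j ∈ Finset.univ.erase i, |A i j| * M := Finset.sum_le_sum h2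
    have heq1 : ∑ j ∈ Finset.univ.erase i, |A i j| * |v j| =
        ∑ j ∈ Finset.univ.erase i, |A i j| * M :=
      le_antisymm h2' (le_trans h3 h1)
    have heq2 : ∑ j ∈ Finset.univ.erase i, |A i j| = |A i i| := by
      have : ∑ j ∈ Finset.univ.erase i, |A i j| * M = |A i i| * M := by
        apply le_antisymm h3
        calc |A i i| * M ≤ _ := h1
          _ = _ := heq1
      rw [← Finset.sum_mul] at this
      exact mul_right_cancel₀ (ne_of_gt hMpos) this
    refine ⟨heq2, ?_⟩
    intro j hAij
    by_cases hji : j = i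
    · rw [hji]; exact hi
    · have hjmem : j ∈ Finset.univ.erase i := Finset.mem_erase.mpr ⟨hji, Finset.mem_univ j⟩
      have hterm : |A i j| * |v j| = |A i j| * M :=
        (Finset.sum_eq_sum_iff_of_le h2).mp heq1 j hjmem
      exact mul_left_cancel₀ (abs_ne_zero.mpr hAij) hterm
  by_cases hall : ∀ i, |v i| = M
  · obtain ⟨k, hk⟩ := h_strict
    exact absurd (key k (hall k)).1 (ne_of_lt hk)
  · push_neg at hall
    obtain ⟨m, hm⟩ := hall
    set S : Set (Fin n) := {i | |v i| = M} with hS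
    have hSne : S.Nonempty := ⟨i0, rfl⟩
    have hSne_univ : S ≠ Set.univ := by
      intro h
      have : m ∈ S := h ▸ Set.mem_univ m
      exact hm this
    obtain ⟨i, hiS, j, hjS, hAij⟩ := h_irr S hSne hSne_univ
    exact hjS ((key i hiS).2 j hAij)
end

section
/- Let n ≥ 1 and let A be an n×n real matrix. Suppose (i) A is irreducible, (ii) A is diagonally dominant, (iii) there exists an index i such that |A i i| > ∑_{j ≠ i} |A i j|, and (iv) every diagonal entry of A is positive. Then every complex eigenvalue μ of A (i.e. of the matrix obtained by mapping the entries of A into ℂ) satisfies Re μ > 0. -/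
/-!
Taussky's refinement of the Levy–Desplanques theorem: if `A *ᵥ v = 0` with `v ≠ 0`, the
diagonal-dominance estimate at a coordinate where `|v|` is maximal forces `|v|` to be
maximal at every neighbour in the graph of `A`; by irreducibility it is then maximal
everywhere, which is impossible at a strictly dominant row. For `Re μ ≤ 0` the matrix
`μ - A` inherits all hypotheses from `A`, since `A i i ≤ ‖μ - A i i‖`.
-/

open Finset

namespace Matrix

variable {K n : Type*}

/-- Irreducibility for matrices of arbitrary sign (Mathlib's `Matrix.IsIrreducible` is about
nonnegative matrices): no nonempty proper set of indices is closed under `i → j` for `A i j ≠ 0`. -/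
def IsIndecomposable [Zero K] (A : Matrix n n K) : Prop :=
  ∀ S : Set n, S.Nonempty → S ≠ Set.univ → ∃ i ∈ S, ∃ j ∉ S, A i j ≠ 0

theorem IsIndecomposable.of_offDiag_ne_zero {L : Type*} [Zero K] [Zero L] {A : Matrix n n K}
    {B : Matrix n n L} (hA : A.IsIndecomposable)
    (h : ∀ i j, i ≠ j → A i j ≠ 0 → B i j ≠ 0) : B.IsIndecomposable := by
  intro S hne huniv
  obtain ⟨i, hi, j, hj, hij⟩ := hA S hne huniv
  exact ⟨i, hi, j, hj, h i j (ne_of_mem_of_not_mem hi hj) hij⟩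

theorem exists_norm_apply_eq_norm {E : Type*} [Fintype n] [Nonempty n] [SeminormedAddGroup E]
    (v : n → E) : ∃ i, ‖v i‖ = ‖v‖ := by
  obtain ⟨i, -, hi⟩ := exists_mem_eq_sup univ univ_nonempty fun i ↦ ‖v i‖₊
  exact ⟨i, by rw [Pi.norm_def, hi, coe_nnnorm]⟩

variable [Fintype n] [DecidableEq n]

section NormedDivisionRing

variable [NormedDivisionRing K] {A : Matrix n n K} {v : n → K}

theorem norm_diag_mul_le_of_mulVec_eq_zero (hv : A *ᵥ v = 0) (i : n) :
    ‖A i i‖ * ‖v i‖ ≤ ∑ j ∈ univ.erase i, ‖A i j‖ * ‖v j‖ := by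
  have h : A i i * v i = -∑ j ∈ univ.erase i, A i j * v j := by
    rw [eq_neg_iff_add_eq_zero, add_sum_erase _ (fun j ↦ A i j * v j) (mem_univ i)]
    exact congrFun hv i
  calc ‖A i i‖ * ‖v i‖ = ‖∑ j ∈ univ.erase i, A i j * v j‖ := by rw [← norm_mul, h, norm_neg]
    _ ≤ ∑ j ∈ univ.erase i, ‖A i j‖ * ‖v j‖ := (norm_sum_le _ _).trans_eq (by simp_rw [norm_mul])

theorem norm_apply_eq_norm_of_mulVec_eq_zero (hv : A *ᵥ v = 0) {i j : n}
    (hdom : ∑ k ∈ univ.erase i, ‖A i k‖ ≤ ‖A i i‖) (hi : ‖v i‖ = ‖v‖) (hji : j ≠ i)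
    (hij : A i j ≠ 0) : ‖v j‖ = ‖v‖ := by
  by_contra hj
  have hlt : ‖v j‖ < ‖v‖ := (norm_le_pi_norm v j).lt_of_ne hj
  refine lt_irrefl (‖A i i‖ * ‖v‖) ?_
  calc ‖A i i‖ * ‖v‖ = ‖A i i‖ * ‖v i‖ := by rw [hi]
    _ ≤ ∑ k ∈ univ.erase i, ‖A i k‖ * ‖v k‖ := norm_diag_mul_le_of_mulVec_eq_zero hv i
    _ < ∑ k ∈ univ.erase i, ‖A i k‖ * ‖v‖ :=
      sum_lt_sum (fun k _ ↦ mul_le_mul_of_nonneg_left (norm_le_pi_norm v k) (norm_nonneg _))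
        ⟨j, mem_erase.2 ⟨hji, mem_univ j⟩, mul_lt_mul_of_pos_left hlt (norm_pos_iff.2 hij)⟩
    _ = (∑ k ∈ univ.erase i, ‖A i k‖) * ‖v‖ := (sum_mul _ _ _).symm
    _ ≤ ‖A i i‖ * ‖v‖ := mul_le_mul_of_nonneg_right hdom (norm_nonneg _)

theorem norm_apply_lt_norm_of_mulVec_eq_zero (hv : A *ᵥ v = 0) (hv0 : v ≠ 0) {i : n}
    (hdom : ∑ k ∈ univ.erase i, ‖A i k‖ < ‖A i i‖) : ‖v i‖ < ‖v‖ := by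
  refine lt_of_mul_lt_mul_left ?_ (norm_nonneg (A i i))
  calc ‖A i i‖ * ‖v i‖ ≤ ∑ k ∈ univ.erase i, ‖A i k‖ * ‖v k‖ :=
        norm_diag_mul_le_of_mulVec_eq_zero hv i
    _ ≤ ∑ k ∈ univ.erase i, ‖A i k‖ * ‖v‖ :=
      sum_le_sum fun k _ ↦ mul_le_mul_of_nonneg_left (norm_le_pi_norm v k) (norm_nonneg _)
    _ = (∑ k ∈ univ.erase i, ‖A i k‖) * ‖v‖ := (sum_mul _ _ _).symm
    _ < ‖A i i‖ * ‖v‖ := mul_lt_mul_of_pos_right hdom (norm_pos_iff.2 hv0)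

theorem IsIndecomposable.norm_apply_eq_norm_of_mulVec_eq_zero (hA : A.IsIndecomposable)
    (hdom : ∀ i, ∑ k ∈ univ.erase i, ‖A i k‖ ≤ ‖A i i‖) (hv : A *ᵥ v = 0) {i : n}
    (hi : ‖v i‖ = ‖v‖) (j : n) : ‖v j‖ = ‖v‖ := by
  by_contra hj
  obtain ⟨k, hk, l, hl, hkl⟩ :=
    hA {j | ‖v j‖ = ‖v‖} ⟨i, hi⟩ (Set.ne_univ_iff_exists_notMem _ |>.2 ⟨j, hj⟩)
  exact hl (Matrix.norm_apply_eq_norm_of_mulVec_eq_zero hv (hdom k) hk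
    (ne_of_mem_of_not_mem hk hl).symm hkl)

end NormedDivisionRing

theorem det_ne_zero_of_isIndecomposable_of_sum_row_le_diag [NormedField K] {A : Matrix n n K}
    (hA : A.IsIndecomposable)
    (hdom : ∀ i, ∑ j ∈ univ.erase i, ‖A i j‖ ≤ ‖A i i‖)
    (hstrict : ∃ i, ∑ j ∈ univ.erase i, ‖A i j‖ < ‖A i i‖) : A.det ≠ 0 := by
  intro hdet
  obtain ⟨v, hv0, hv⟩ := exists_mulVec_eq_zero_iff.2 hdet
  obtain ⟨i, hi⟩ := hstrict
  have : Nonempty n := ⟨i⟩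
  obtain ⟨k, hk⟩ := exists_norm_apply_eq_norm v
  exact (norm_apply_lt_norm_of_mulVec_eq_zero hv hv0 hi).ne
    (hA.norm_apply_eq_norm_of_mulVec_eq_zero hdom hv hk i)

end Matrix

theorem Complex.le_norm_sub_ofReal {μ : ℂ} {a : ℝ} (hμ : μ.re ≤ 0) : a ≤ ‖μ - a‖ := by
  rw [norm_sub_rev]
  calc a ≤ ((a : ℂ) - μ).re := by simpa using hμ
    _ ≤ ‖(a : ℂ) - μ‖ := re_le_norm _

theorem taussky_eigenvalues_pos_re_general {n : ℕ} (A : Matrix (Fin n) (Fin n) ℝ)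
    (h_irr : ∀ S : Set (Fin n), S.Nonempty → S ≠ Set.univ →
      ∃ i ∈ S, ∃ j ∉ S, A i j ≠ 0)
    (h_dd : ∀ i : Fin n, ∑ j ∈ Finset.univ.erase i, |A i j| ≤ |A i i|)
    (h_strict : ∃ i : Fin n, ∑ j ∈ Finset.univ.erase i, |A i j| < |A i i|)
    (h_pos : ∀ i : Fin n, 0 < A i i) :
    ∀ μ : ℂ, μ ∈ spectrum ℂ (A.map (algebraMap ℝ ℂ)) → 0 < μ.re := by
  intro μ hμ
  by_contra! hre
  set B := algebraMap ℂ (Matrix (Fin n) (Fin n) ℂ) μ - A.map (algebraMap ℝ ℂ)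
  have hoff : ∀ i j, i ≠ j → B i j = -A i j := fun i j hij ↦ by
    simp [B, Matrix.algebraMap_matrix_apply, hij]
  have hsum : ∀ i, ∑ j ∈ univ.erase i, ‖B i j‖ = ∑ j ∈ univ.erase i, |A i j| := fun i ↦
    sum_congr rfl fun j hj ↦ by rw [hoff i j (ne_of_mem_erase hj).symm, norm_neg, Complex.norm_real,
      Real.norm_eq_abs]
  have hdiag : ∀ i, |A i i| ≤ ‖B i i‖ := fun i ↦ by
    simpa [B, Matrix.algebraMap_matrix_apply, abs_of_pos (h_pos i)] using
      Complex.le_norm_sub_ofReal (a := A i i) hre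
  refine hμ (B.isUnit_iff_isUnit_det.2 (isUnit_iff_ne_zero.2 ?_))
  refine Matrix.det_ne_zero_of_isIndecomposable_of_sum_row_le_diag ?_ (fun i ↦ ?_) ?_
  · exact Matrix.IsIndecomposable.of_offDiag_ne_zero h_irr fun i j hij hA ↦ by
      simpa [hoff i j hij] using hA
  · exact (hsum i).trans_le ((h_dd i).trans (hdiag i))
  · obtain ⟨i, hi⟩ := h_strict
    exact ⟨i, (hsum i).trans_lt (hi.trans_le (hdiag i))⟩

/-- **Taussky's theorem, second part.** An irreducible, diagonally dominant real
matrix with at least one strictly dominant row and positive diagonal entries has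
all its complex eigenvalues in the open right half plane. -/
theorem taussky_eigenvalues_pos_re {n : ℕ} (hn : 1 ≤ n) (A : Matrix (Fin n) (Fin n) ℝ)
    (h_irr : ∀ S : Set (Fin n), S.Nonempty → S ≠ Set.univ →
      ∃ i ∈ S, ∃ j ∉ S, A i j ≠ 0)
    (h_dd : ∀ i : Fin n, ∑ j ∈ Finset.univ.erase i, |A i j| ≤ |A i i|)
    (h_strict : ∃ i : Fin n, ∑ j ∈ Finset.univ.erase i, |A i j| < |A i i|)
    (h_pos : ∀ i : Fin n, 0 < A i i) :
    ∀ μ : ℂ, μ ∈ spectrum ℂ (A.map (algebraMap ℝ ℂ)) → 0 < μ.re :=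
  taussky_eigenvalues_pos_re_general A h_irr h_dd h_strict h_pos
end

section
/- Let G be a connected simple graph on the finite vertex set V with |V| = n, let L be its Laplacian matrix, and let S be a nonempty proper subset of V such that the subgraph of G induced on S is connected. Then the diagonal block C_S of L associated with S (the principal submatrix of L with rows and columns indexed by S) is nonsingular: det C_S ≠ 0. -/
open Matrix


/-- **Main theorem.** Let `G` be a connected simple graph on a finite vertex set `V`
with Laplacian matrix `L`, and let `S` be a nonempty proper subset of `V` whose
induced subgraph is connected. Then the diagonal block of `L` associated with `S`
(the principal submatrix indexed by `S`) is nonsingular. -/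
theorem lapMatrix_block_det_ne_zero {V : Type*} [Fintype V] [DecidableEq V]
    (G : SimpleGraph V) [DecidableRel G.Adj] (hG : G.Connected)
    (S : Set V) [DecidablePred (· ∈ S)]
    (hS : S.Nonempty) (hSproper : S ≠ Set.univ)
    (hconn : (G.induce S).Connected) :
    ((G.lapMatrix ℝ).submatrix (Subtype.val : S → V) (Subtype.val : S → V)).det ≠ 0 := by
  set L := G.lapMatrix ℝ
  set C := L.submatrix (Subtype.val : S → V) (Subtype.val : S → V) with hC
  intro hdet
  obtain ⟨x, hx0, hx⟩ := (Matrix.exists_mulVec_eq_zero_iff).mpr hdet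
  -- extend x by zero
  set y : V → ℝ := fun v => if h : v ∈ S then x ⟨v, h⟩ else 0 with hy
  have hyS : ∀ (v : V) (h : v ∈ S), y v = x ⟨v, h⟩ := by
    intro v h; simp [hy, h]
  have hyO : ∀ v : V, v ∉ S → y v = 0 := by
    intro v h; simp [hy, h]
  -- mulVec of L on y, restricted to S, equals C *ᵥ x
  have hmul : ∀ i : S, (L *ᵥ y) (i : V) = (C *ᵥ x) i := by
    intro i
    simp only [Matrix.mulVec, dotProduct, hC, Matrix.submatrix_apply]
    have h1 : (∑ j : V, L (i : V) j * y j) = ∑ j ∈ S.toFinset, L (i : V) j * y j := by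
      refine (Finset.sum_subset (Finset.subset_univ _) ?_).symm
      intro j _ hj
      rw [hyO j (fun h => hj (Set.mem_toFinset.mpr h)), mul_zero]
    rw [h1, Finset.sum_subtype S.toFinset (fun j => Set.mem_toFinset)
        (fun j => L (i : V) j * y j)]
    apply Finset.sum_congr rfl
    intro j _
    rw [hyS (j : V) j.2]
  -- quadratic form vanishes
  have hquad : Matrix.toLinearMap₂' ℝ L y y = 0 := by
    rw [Matrix.toLinearMap₂'_apply']
    simp only [dotProduct]
    apply Finset.sum_eq_zero
    intro v _
    by_cases h : v ∈ S
    · rw [hmul ⟨v, h⟩, hx, Pi.zero_apply, mul_zero]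
    · rw [hyO v h, zero_mul]
  have hreach := (G.lapMatrix_toLinearMap₂'_apply'_eq_zero_iff_forall_reachable y).mp hquad
  -- y is constant, and zero outside S
  obtain ⟨v, hv⟩ := hS
  obtain ⟨w, hw⟩ : ∃ w : V, w ∉ S := by
    by_contra h
    push_neg at h
    exact hSproper (Set.eq_univ_of_forall h)
  have : ∀ u : V, y u = 0 := by
    intro u
    rw [hreach u w ((hG u w))]
    exact hyO w hw
  apply hx0
  funext i
  have := this (i : V)
  rwa [hyS (i : V) i.2] at this
end

section
/- Let G be a connected simple graph on the finite vertex set V with |V| = n, let L be its Laplacian matrix, and let S be a nonempty proper subset of V such that the subgraph of G induced on S is connected. Then every complex eigenvalue μ of the diagonal block C_S of L associated with S (the principal submatrix of L with rows and columns indexed by S, mapped entrywise into ℂ) satisfies Re μ > 0. -/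
/-!
The block `C_S` is positive definite: its quadratic form at `x` is the Laplacian form
`∑_{uv ∈ E} (y u - y v)²` at the extension `y` of `x` by zero, and on a connected graph this
vanishes only for constant `y`, which is then zero because `S` misses a vertex. Over `ℂ` the block
is therefore Hermitian positive definite, so its eigenvalues are positive reals.
-/

open Function Matrix
open scoped ComplexOrder

namespace Matrix

variable {m n : Type*} [Fintype m] [Fintype n]

theorem dotProduct_submatrix_mulVec {R : Type*} [NonUnitalNonAssocSemiring R] {e : m → n}
    (he : Injective e) (A : Matrix n n R) (u x : m → R) :
    u ⬝ᵥ (A.submatrix e e *ᵥ x) = extend e u 0 ⬝ᵥ (A *ᵥ extend e x 0) := by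
  have hmulVec (i : m) : (A.submatrix e e *ᵥ x) i = (A *ᵥ extend e x 0) (e i) :=
    Fintype.sum_of_injective e he _ _
      (fun j hj => by rw [extend_apply' _ _ _ (by simpa using hj), Pi.zero_apply, mul_zero])
      (fun j => by simp only [submatrix_apply, he.extend_apply])
  exact Fintype.sum_of_injective e he _ _
    (fun j hj => by rw [extend_apply' _ _ _ (by simpa using hj), Pi.zero_apply, zero_mul])
    (fun i => by rw [hmulVec, he.extend_apply])

theorem re_star_dotProduct_map_mulVec (A : Matrix n n ℝ) (x : n → ℂ) :
    (star x ⬝ᵥ (A.map (algebraMap ℝ ℂ) *ᵥ x)).re =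
      (Complex.re ∘ x) ⬝ᵥ (A *ᵥ (Complex.re ∘ x)) + (Complex.im ∘ x) ⬝ᵥ (A *ᵥ (Complex.im ∘ x)) := by
  simp only [dotProduct, mulVec, Pi.star_apply, Finset.mul_sum, Complex.re_sum,
    ← Finset.sum_add_distrib]
  refine Finset.sum_congr rfl fun i _ => Finset.sum_congr rfl fun j _ => ?_
  simp only [map_apply, Complex.mul_re, Complex.mul_im, Complex.star_def, Complex.conj_re,
    Complex.conj_im, Complex.coe_algebraMap, Complex.ofReal_re, Complex.ofReal_im, comp_def]
  ring

theorem PosDef.map_algebraMap_complex {A : Matrix n n ℝ} (hA : A.PosDef) :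
    (A.map (algebraMap ℝ ℂ)).PosDef := by
  have hH : (A.map (algebraMap ℝ ℂ)).IsHermitian :=
    hA.isHermitian.map _ fun _ => (Complex.conj_ofReal _).symm
  refine .of_dotProduct_mulVec_pos hH fun x hx => Complex.pos_iff.mpr
    ⟨?_, (hH.im_star_dotProduct_mulVec_self x).symm⟩
  have hpos {y : n → ℝ} (hy : y ≠ 0) : 0 < y ⬝ᵥ (A *ᵥ y) := by
    simpa using hA.dotProduct_mulVec_pos hy
  have hnonneg (y : n → ℝ) : 0 ≤ y ⬝ᵥ (A *ᵥ y) := by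
    simpa using hA.posSemidef.dotProduct_mulVec_nonneg y
  rw [re_star_dotProduct_map_mulVec]
  by_cases hre : Complex.re ∘ x = 0
  · have him : Complex.im ∘ x ≠ 0 := fun him =>
      hx (funext fun i => Complex.ext (congrFun hre i) (congrFun him i))
    exact add_pos_of_nonneg_of_pos (hnonneg _) (hpos him)
  · exact add_pos_of_pos_of_nonneg (hpos hre) (hnonneg _)

theorem PosDef.pos_of_mem_spectrum {𝕜 : Type*} [RCLike 𝕜] [DecidableEq n] {A : Matrix n n 𝕜}
    (hA : A.PosDef) {μ : 𝕜} (hμ : μ ∈ spectrum 𝕜 A) : 0 < μ := by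
  rw [hA.isHermitian.spectrum_eq_image_range] at hμ
  obtain ⟨_, ⟨i, rfl⟩, rfl⟩ := hμ
  exact RCLike.ofReal_pos.mpr (hA.eigenvalues_pos i)

end Matrix

namespace SimpleGraph

variable {V : Type*} [Fintype V] [DecidableEq V] {G : SimpleGraph V} [DecidableRel G.Adj]

theorem posDef_lapMatrix_submatrix (hG : G.Connected) {ι : Type*} [Fintype ι] {e : ι → V}
    (he : Injective e) {w : V} (hw : w ∉ Set.range e) :
    ((G.lapMatrix ℝ).submatrix e e).PosDef := by
  refine .of_dotProduct_mulVec_pos ((G.isHermitian_lapMatrix ℝ).submatrix e) fun x hx => ?_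
  rw [star_trivial, dotProduct_submatrix_mulVec he]
  have hnonneg : 0 ≤ extend e x 0 ⬝ᵥ (G.lapMatrix ℝ *ᵥ extend e x 0) := by
    simpa using (G.posSemidef_lapMatrix ℝ).dotProduct_mulVec_nonneg (extend e x 0)
  refine lt_of_le_of_ne hnonneg fun hzero => hx (funext fun i => ?_)
  have hconst := (G.lapMatrix_toLinearMap₂'_apply'_eq_zero_iff_forall_reachable (extend e x 0)).mp
    (by rw [toLinearMap₂'_apply', ← hzero])
  simpa [he.extend_apply, extend_apply' _ _ _ (by simpa using hw)] using
    hconst (e i) w (hG.preconnected _ _)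

end SimpleGraph

theorem lapMatrix_block_eigenvalues_pos_re_general {V : Type*} [Fintype V] [DecidableEq V]
    (G : SimpleGraph V) [DecidableRel G.Adj] (hG : G.Connected)
    (S : Set V) [DecidablePred (· ∈ S)]
    (hSproper : S ≠ Set.univ) :
    ∀ μ : ℂ, μ ∈ spectrum ℂ
      (((G.lapMatrix ℝ).submatrix (Subtype.val : S → V) (Subtype.val : S → V)).map
        (algebraMap ℝ ℂ)) → 0 < μ.re := by
  intro μ hμ
  obtain ⟨w, hw⟩ := (Set.ne_univ_iff_exists_notMem S).mp hSproper
  have hC := (G.posDef_lapMatrix_submatrix hG Subtype.val_injective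
    (w := w) (by rwa [Subtype.range_coe])).map_algebraMap_complex
  exact (Complex.pos_iff.mp (hC.pos_of_mem_spectrum hμ)).1

/-- Let `G` be a connected simple graph on a finite vertex set `V` with Laplacian
matrix `L`, and let `S` be a nonempty proper subset of `V` whose induced subgraph is
connected. Then every complex eigenvalue of the diagonal block of `L` associated
with `S` has positive real part. -/
theorem lapMatrix_block_eigenvalues_pos_re {V : Type*} [Fintype V] [DecidableEq V]
    (G : SimpleGraph V) [DecidableRel G.Adj] (hG : G.Connected)
    (S : Set V) [DecidablePred (· ∈ S)]
    (hS : S.Nonempty) (hSproper : S ≠ Set.univ)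
    (hconn : (G.induce S).Connected) :
    ∀ μ : ℂ, μ ∈ spectrum ℂ
      (((G.lapMatrix ℝ).submatrix (Subtype.val : S → V) (Subtype.val : S → V)).map
        (algebraMap ℝ ℂ)) → 0 < μ.re :=
  lapMatrix_block_eigenvalues_pos_re_general G hG S hSproper
end

section
/- Let G be a connected simple graph on the finite vertex set V, let L be its Laplacian matrix, and let S be a nonempty proper subset of V such that the subgraph of G induced on S is connected. Let C_S = (L i j)_{i,j ∈ S} be the diagonal block of L associated with S and let Y_S = (L i j)_{i ∈ S, j ∉ S} be the bridge matrix of S. Then rank(Y_S) ≤ rank(C_S) and rank(C_S) − rank(Y_S) < |S|; equivalently, the degree of freedom δ(C_S, Y_S) = rank(C_S) − rank(Y_S) satisfies 0 ≤ δ(C_S, Y_S) < |S|. -/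
/-!
Since `G` is connected and `S` misses a vertex, the diagonal block `C_S` is invertible: a kernel
vector of `C_S`, extended by zero, is annihilated by the Laplacian quadratic form, hence constant
on `V`, hence zero. So `rank C_S = |S|`, while `rank Y_S ≤ |S|` trivially. A boundary edge of `S`
puts an entry `-1` into `Y_S`, so `rank Y_S ≥ 1`.
-/

open Matrix Function

namespace Matrix

variable {ι m n R : Type*} [Fintype ι] [Fintype n]

theorem mulVec_extend_zero [NonUnitalNonAssocSemiring R] (A : Matrix m n R) {e : ι → n}
    (he : Injective e) (x : ι → R) :
    A *ᵥ extend e x 0 = A.submatrix id e *ᵥ x := by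
  ext u
  refine (Fintype.sum_of_injective e he _ _ (fun v hv => ?_) fun i => ?_).symm
  · rw [extend_apply' _ _ _ (by simpa using hv), Pi.zero_apply, mul_zero]
  · rw [he.extend_apply]; rfl

theorem one_le_rank_of_ne_zero {K : Type*} [Field K] {A : Matrix m n K} (hA : A ≠ 0) :
    1 ≤ A.rank := by
  classical
  rwa [rank, Submodule.one_le_finrank_iff, Ne, LinearMap.range_eq_bot, ← toLin'_apply',
    LinearEquiv.map_eq_zero_iff]

end Matrix

namespace SimpleGraph

variable {V : Type*} [Fintype V] [DecidableEq V] (G : SimpleGraph V) [DecidableRel G.Adj]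

theorem lapMatrix_apply_of_adj {R : Type*} [AddGroupWithOne R] {u v : V} (h : G.Adj u v) :
    G.lapMatrix R u v = -1 := by
  simp [lapMatrix, degMatrix, h.ne, h]

theorem eq_zero_of_lapMatrix_submatrix_mulVec_eq_zero {ι : Type*} [Fintype ι]
    (hG : G.Preconnected) {e : ι → V} (he : Injective e) {b : V} (hb : b ∉ Set.range e)
    {x : ι → ℝ} (hx : (G.lapMatrix ℝ).submatrix e e *ᵥ x = 0) : x = 0 := by
  set y := extend e x 0 with hy
  have hLy (i : ι) : (G.lapMatrix ℝ *ᵥ y) (e i) = 0 := by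
    rw [mulVec_extend_zero _ he]
    exact congrFun hx i
  have hquad : toLinearMap₂' ℝ (G.lapMatrix ℝ) y y = 0 := by
    rw [toLinearMap₂'_apply']
    refine Finset.sum_eq_zero fun v _ => ?_
    by_cases hv : ∃ i, e i = v
    · obtain ⟨i, rfl⟩ := hv
      rw [hLy, mul_zero]
    · rw [hy, extend_apply' _ _ _ hv, Pi.zero_apply, zero_mul]
  have hconst := (G.lapMatrix_toLinearMap₂'_apply'_eq_zero_iff_forall_reachable y).1 hquad
  ext i
  simpa [y, he.extend_apply, extend_apply' _ _ _ (by simpa using hb)] using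
    hconst (e i) b (hG _ _)

theorem isUnit_lapMatrix_submatrix {ι : Type*} [Fintype ι] [DecidableEq ι]
    (hG : G.Preconnected) {e : ι → V} (he : Injective e) {b : V} (hb : b ∉ Set.range e) :
    IsUnit ((G.lapMatrix ℝ).submatrix e e) := by
  rw [isUnit_iff_isUnit_det, isUnit_iff_ne_zero, Ne, ← exists_mulVec_eq_zero_iff]
  rintro ⟨x, hx0, hx⟩
  exact hx0 (G.eq_zero_of_lapMatrix_submatrix_mulVec_eq_zero hG he hb hx)

theorem lapMatrix_submatrix_compl_ne_zero {R : Type*} [Ring R] [Nontrivial R]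
    (hG : G.Preconnected) {S : Set V} {a b : V} (ha : a ∈ S) (hb : b ∉ S) :
    (G.lapMatrix R).submatrix (Subtype.val : S → V) (fun j : {j : V // j ∉ S} => (j : V)) ≠
      0 := by
  obtain ⟨d, -, hd₁, hd₂⟩ := (hG a b).some.exists_boundary_dart S ha hb
  intro h
  simpa [G.lapMatrix_apply_of_adj d.adj] using congrFun₂ h ⟨d.fst, hd₁⟩ ⟨d.snd, hd₂⟩

end SimpleGraph

theorem dof_bounds_general {V : Type*} [Fintype V] [DecidableEq V]
    (G : SimpleGraph V) [DecidableRel G.Adj] (hG : G.Connected)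
    (S : Set V) [DecidablePred (· ∈ S)]
    (hS : S.Nonempty) (hSproper : S ≠ Set.univ) :
    ((G.lapMatrix ℝ).submatrix (Subtype.val : S → V)
        (fun j : {j : V // j ∉ S} => (j : V))).rank ≤
      ((G.lapMatrix ℝ).submatrix (Subtype.val : S → V) (Subtype.val : S → V)).rank ∧
    ((G.lapMatrix ℝ).submatrix (Subtype.val : S → V) (Subtype.val : S → V)).rank -
      ((G.lapMatrix ℝ).submatrix (Subtype.val : S → V)
        (fun j : {j : V // j ∉ S} => (j : V))).rank < Fintype.card S := by
  set C := (G.lapMatrix ℝ).submatrix (Subtype.val : S → V) (Subtype.val : S → V)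
  set Y :=
    (G.lapMatrix ℝ).submatrix (Subtype.val : S → V) (fun j : {j : V // j ∉ S} => (j : V))
  obtain ⟨a, ha⟩ := hS
  obtain ⟨b, hb⟩ : ∃ b, b ∉ S := by simpa [Set.eq_univ_iff_forall] using hSproper
  have hC : C.rank = Fintype.card S :=
    rank_of_isUnit _ (G.isUnit_lapMatrix_submatrix hG.preconnected Subtype.val_injective
      (b := b) (by simpa))
  have hY_pos : 1 ≤ Y.rank :=
    one_le_rank_of_ne_zero (G.lapMatrix_submatrix_compl_ne_zero hG.preconnected ha hb)
  have hY_le : Y.rank ≤ Fintype.card S := rank_le_card_height Y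
  omega

/-- **Proposition (degrees of freedom bounds).** Let `G` be a connected simple graph
on a finite vertex set `V` with Laplacian `L`, and let `S` be a nonempty proper subset
of `V` whose induced subgraph is connected. With `C_S = (L i j)_{i,j ∈ S}` the diagonal
block and `Y_S = (L i j)_{i ∈ S, j ∉ S}` the bridge matrix, the degree of freedom
`δ(C_S, Y_S) = rank C_S - rank Y_S` satisfies `0 ≤ δ(C_S, Y_S) < |S|`; that is,
`rank Y_S ≤ rank C_S` and `rank C_S - rank Y_S < |S|`. -/
theorem dof_bounds {V : Type*} [Fintype V] [DecidableEq V]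
    (G : SimpleGraph V) [DecidableRel G.Adj] (hG : G.Connected)
    (S : Set V) [DecidablePred (· ∈ S)]
    (hS : S.Nonempty) (hSproper : S ≠ Set.univ)
    (hconn : (G.induce S).Connected) :
    ((G.lapMatrix ℝ).submatrix (Subtype.val : S → V)
        (fun j : {j : V // j ∉ S} => (j : V))).rank ≤
      ((G.lapMatrix ℝ).submatrix (Subtype.val : S → V) (Subtype.val : S → V)).rank ∧
    ((G.lapMatrix ℝ).submatrix (Subtype.val : S → V) (Subtype.val : S → V)).rank -
      ((G.lapMatrix ℝ).submatrix (Subtype.val : S → V)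
        (fun j : {j : V // j ∉ S} => (j : V))).rank < Fintype.card S :=
  dof_bounds_general G hG S hS hSproper
end

section
/- Let G be a connected simple graph on the finite vertex set V, let L be its Laplacian matrix, and let S ⊆ V be nonempty and proper with the subgraph induced on S connected. Then the diagonal block C_S = (L i j)_{i,j ∈ S} has full rank: rank(C_S) = |S|. -/
/-!
If `C_S x = 0`, extend `x` by zero to a vector `y` on `V`. The Laplacian quadratic form of `y`
equals `xᵀ C_S x = 0`, so `y` is constant along edges, hence constant on the connected graph `G`.
Since `y` vanishes off the proper subset `S`, `y = 0`; so `C_S` is injective, hence invertible.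
-/

open Matrix

theorem Matrix.dotProduct_submatrix_mulVec_eq_extend {m n R : Type*} [Fintype m] [Fintype n]
    [CommSemiring R] (M : Matrix n n R) {f : m → n} (hf : f.Injective) (x : m → R) :
    x ⬝ᵥ (M.submatrix f f *ᵥ x) =
      Function.extend f x 0 ⬝ᵥ (M *ᵥ Function.extend f x 0) := by
  have sum_extend (g : n → R) : ∑ j, Function.extend f x 0 j * g j = ∑ i, x i * g (f i) :=
    (Fintype.sum_of_injective f hf _ _
      (fun j hj => by rw [Function.extend_apply' _ _ _ (by simpa using hj)]; simp)
      (fun i => by rw [hf.extend_apply])).symm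
  simp only [dotProduct, mulVec, submatrix_apply, mul_comm (M _ _), sum_extend]

theorem SimpleGraph.lapMatrix_submatrix_mulVec_injective {V m : Type*} [Fintype V]
    [DecidableEq V] [Fintype m] {G : SimpleGraph V} [DecidableRel G.Adj] (hG : G.Connected)
    {f : m → V} (hf : f.Injective) (hf' : ¬f.Surjective) :
    ((G.lapMatrix ℝ).submatrix f f).mulVec.Injective := by
  obtain ⟨w, hw⟩ : ∃ w, w ∉ Set.range f := by simpa [Function.Surjective] using hf'
  refine (injective_iff_map_eq_zero (mulVecLin _)).2 fun x hx => ?_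
  set y := Function.extend f x 0
  have hquad : toLinearMap₂' ℝ (G.lapMatrix ℝ) y y = 0 := by
    rw [toLinearMap₂'_apply', ← dotProduct_submatrix_mulVec_eq_extend _ hf, ← mulVecLin_apply, hx,
      dotProduct_zero]
  have hconst := (G.lapMatrix_toLinearMap₂'_apply'_eq_zero_iff_forall_reachable y).1 hquad
  funext i
  simpa [y, hf.extend_apply, Function.extend_apply' _ _ _ hw] using
    hconst (f i) w (hG.preconnected _ _)

theorem lapMatrix_block_full_rank_general {V : Type*} [Fintype V] [DecidableEq V]
    (G : SimpleGraph V) [DecidableRel G.Adj] (hG : G.Connected)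
    (S : Set V) [DecidablePred (· ∈ S)]
    (hSproper : S ≠ Set.univ) :
    ((G.lapMatrix ℝ).submatrix (Subtype.val : S → V) (Subtype.val : S → V)).rank =
      Fintype.card S := by
  have hval : ¬(Subtype.val : S → V).Surjective := by
    rwa [← Set.range_eq_univ, Subtype.range_val]
  exact rank_of_isUnit _ <| mulVec_injective_iff_isUnit.1 <|
    G.lapMatrix_submatrix_mulVec_injective hG Subtype.val_injective hval

/-- Let `G` be a connected simple graph on a finite vertex set `V` with Laplacian `L`,
and let `S` be a nonempty proper subset of `V` whose induced subgraph is connected.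
Then the diagonal block `C_S = (L i j)_{i,j ∈ S}` has full rank `|S|`. -/
theorem lapMatrix_block_full_rank {V : Type*} [Fintype V] [DecidableEq V]
    (G : SimpleGraph V) [DecidableRel G.Adj] (hG : G.Connected)
    (S : Set V) [DecidablePred (· ∈ S)]
    (hS : S.Nonempty) (hSproper : S ≠ Set.univ)
    (hconn : (G.induce S).Connected) :
    ((G.lapMatrix ℝ).submatrix (Subtype.val : S → V) (Subtype.val : S → V)).rank =
      Fintype.card S :=
  lapMatrix_block_full_rank_general G hG S hSproper
end
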